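/- A sparse vector x with ‖x‖₀ ≤ L can be uniquely recovered from measurements y = Cx (i.e., for all x₁, x₂ with ‖x₁‖₀ ≤ L, ‖x₂‖₀ ≤ L, Cx₁ = Cx₂ implies x₁ = x₂) if and only if spark(C) > 2L. -/

import Mathlib

/-- The spark of a matrix: the smallest number of nonzero entries of a nonzero
vector in its kernel, with value `⊤` if the columns are linearly independent. -/
noncomputable def spark {m n : Type*} [Fintype m] [Fintype n] (M : Matrix m n ℂ) : ℕ∞ :=
  sInf {k : ℕ∞ | ∃ x : n → ℂ, x ≠ 0 ∧ M.mulVec x = 0 ∧ ((Function.support x).ncard : ℕ∞) = k}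

/-! Two `L`-sparse vectors with the same measurements differ by a kernel vector with at most
`2 L` nonzero entries. Conversely, a kernel vector with at most `2 L` nonzero entries splits along
its support as `y + z` with `y` and `-z` both `L`-sparse and `C y = C (-z)`. -/

open Function Matrix

theorem Function.exists_add_eq_of_ncard_support_le_add {ι M : Type*} [Finite ι] [AddZeroClass M]
    (x : ι → M) {a b : ℕ} (hx : (support x).ncard ≤ a + b) :
    ∃ y z : ι → M, y + z = x ∧ (support y).ncard ≤ a ∧ (support z).ncard ≤ b := by
  obtain ⟨t, hts, ht⟩ := Set.exists_subset_card_eq (min_le_right a (support x).ncard)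
  refine ⟨t.indicator x, tᶜ.indicator x, t.indicator_self_add_compl x, ?_, ?_⟩
  · rw [Set.support_indicator, Set.inter_eq_left.mpr hts, ht]
    exact min_le_left _ _
  · rw [Set.support_indicator, Set.inter_comm, ← Set.sdiff_eq, Set.ncard_sdiff hts, ht]
    omega

theorem Matrix.injOn_mulVec_setOf_ncard_support_le_iff {m n R : Type*} [Fintype n] [Ring R]
    (M : Matrix m n R) (L : ℕ) :
    Set.InjOn M.mulVec {x | (support x).ncard ≤ L} ↔
      ∀ x, x ≠ 0 → M *ᵥ x = 0 → 2 * L < (support x).ncard := by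
  constructor
  · intro hinj x hx0 hMx
    by_contra! hx
    obtain ⟨y, z, rfl, hy, hz⟩ :=
      exists_add_eq_of_ncard_support_le_add x (a := L) (b := L) (by omega)
    have hMyz : M *ᵥ y = M *ᵥ -z := by
      rw [mulVec_neg, eq_neg_iff_add_eq_zero, ← mulVec_add, hMx]
    have hyz : y = -z := hinj hy (by simpa [support_neg] using hz) hMyz
    exact hx0 (by rw [hyz, neg_add_cancel])
  · intro hker x₁ hx₁ x₂ hx₂ hM
    by_contra hne
    have hsupp : (support (x₁ - x₂)).ncard ≤ (support x₁).ncard + (support x₂).ncard :=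
      (Set.ncard_le_ncard (support_sub x₁ x₂)).trans (Set.ncard_union_le _ _)
    have hlt := hker (x₁ - x₂) (sub_ne_zero.mpr hne) (by rw [mulVec_sub, hM, sub_self])
    simp only [Set.mem_ofPred_eq] at hx₁ hx₂
    omega

theorem lt_spark_iff {m n : Type*} [Fintype m] [Fintype n] (M : Matrix m n ℂ) (k : ℕ) :
    (k : ℕ∞) < spark M ↔ ∀ x, x ≠ 0 → M *ᵥ x = 0 → k < (support x).ncard := by
  rw [← ENat.add_one_le_iff (ENat.natCast_ne_top k), spark, le_sInf_iff]
  simp only [Set.mem_ofPred_eq, forall_exists_index, and_imp]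
  refine ⟨fun h x hx hMx => ?_, fun h _ x hx hMx hk => hk ▸ ?_⟩
  · exact_mod_cast h _ x hx hMx rfl
  · exact_mod_cast h x hx hMx

theorem stmt4 (m n L : ℕ) (C : Matrix (Fin m) (Fin n) ℂ) :
    (∀ x₁ x₂ : Fin n → ℂ, (Function.support x₁).ncard ≤ L →
        (Function.support x₂).ncard ≤ L → C.mulVec x₁ = C.mulVec x₂ → x₁ = x₂)
      ↔ (2 * L : ℕ∞) < spark C := by
  have h := (C.injOn_mulVec_setOf_ncard_support_le_iff L).trans (lt_spark_iff C (2 * L)).symm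
  push_cast at h
  exact ⟨fun hinj => h.mp fun x₁ h₁ x₂ h₂ => hinj x₁ x₂ h₁ h₂, fun hlt x₁ x₂ h₁ h₂ => h.mpr hlt h₁ h₂⟩
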